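/- arXiv:1612.02049 — 2 statements merged into one kernel-verified Lean document; each statement's English description precedes it below -/
import Mathlib

section
/- The symplectic group Sp(2g, F₂) acts transitively on the set of even quadratic forms, and transitively on the set of odd quadratic forms, on a 2g-dimensional symplectic F₂-vector space; i.e., the orbits of Q(V) under γ·q(v) := q(γ⁻¹v) are exactly the level sets of the Arf invariant. -/
/-- `q` is a quadratic form refining the symplectic form `ω`. -/
def IsQuadraticRefinement {V : Type*} [AddCommGroup V] [Module (ZMod 2) V]
    (ω : V →ₗ[ZMod 2] V →ₗ[ZMod 2] ZMod 2) (q : V → ZMod 2) : Prop :=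
  ∀ v w, q (v + w) = q v + q w + ω v w

/-- A basis indexed by `Fin g ⊕ Fin g` is symplectic for `ω`. -/
def IsSymplecticBasis {V : Type*} [AddCommGroup V] [Module (ZMod 2) V] {g : ℕ}
    (ω : V →ₗ[ZMod 2] V →ₗ[ZMod 2] ZMod 2)
    (b : Module.Basis (Fin g ⊕ Fin g) (ZMod 2) V) : Prop :=
  (∀ i j, ω (b (Sum.inl i)) (b (Sum.inr j)) = if i = j then 1 else 0) ∧
  (∀ i j, ω (b (Sum.inl i)) (b (Sum.inl j)) = 0) ∧
  (∀ i j, ω (b (Sum.inr i)) (b (Sum.inr j)) = 0)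

/-- The Arf invariant of `q` with respect to the symplectic basis `b`. -/
noncomputable def arfInvariant {V : Type*} [AddCommGroup V] [Module (ZMod 2) V] {g : ℕ}
    (b : Module.Basis (Fin g ⊕ Fin g) (ZMod 2) V) (q : V → ZMod 2) : ZMod 2 :=
  ∑ i : Fin g, q (b (Sum.inl i)) * q (b (Sum.inr i))

/-!
Two quadratic refinements of `ω` differ by a linear form, which by nondegeneracy of `ω` is
`ω u` for some `u`. The Arf invariant is the majority value of `q`:
`∑ v, (-1) ^ q v = 2 ^ g * (-1) ^ Arf q`. This sum is invariant under any symplectic `γ`, and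
the substitution `v ↦ v + u` shows `Arf (q + ω u) = q u + Arf q`. So equal Arf invariants force
`q u = 0`, and then the transvection `v ↦ v + ω u v • u`, which is symplectic, carries `q` to
`q + ω u`.
-/

open Finset Sum

def zmodTwoSign (x : ZMod 2) : ℤ := if x = 0 then 1 else -1

lemma zmodTwoSign_zero : zmodTwoSign 0 = 1 := rfl

lemma zmodTwoSign_add (x y : ZMod 2) : zmodTwoSign (x + y) = zmodTwoSign x * zmodTwoSign y := by
  revert x y; decide

lemma zmodTwoSign_injective : Function.Injective zmodTwoSign := by
  unfold Function.Injective; decide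

lemma zmodTwoSign_sum {ι : Type*} (s : Finset ι) (f : ι → ZMod 2) :
    zmodTwoSign (∑ i ∈ s, f i) = ∏ i ∈ s, zmodTwoSign (f i) := by
  induction s using Finset.cons_induction with
  | empty => rfl
  | cons a s ha ih => rw [sum_cons, prod_cons, zmodTwoSign_add, ih]

lemma sum_zmodTwoSign_plane (α β : ZMod 2) :
    ∑ z : ZMod 2 × ZMod 2, zmodTwoSign (z.1 * α + z.2 * β + z.1 * z.2) =
      2 * zmodTwoSign (α * β) := by
  revert α β; decide

lemma LinearEquiv.apply_symm_apply_symm_of_preserves {R M N : Type*} [CommSemiring R]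
    [AddCommMonoid M] [AddCommMonoid N] [Module R M] [Module R N] {ω : M →ₗ[R] M →ₗ[R] N}
    {γ : M ≃ₗ[R] M} (hγ : ∀ v w, ω (γ v) (γ w) = ω v w) (v w : M) :
    ω (γ.symm v) (γ.symm w) = ω v w := by
  simpa using (hγ (γ.symm v) (γ.symm w)).symm

lemma LinearMap.IsAlt.apply_transvection {R M : Type*} [CommRing R] [AddCommGroup M]
    [Module R M] {ω : M →ₗ[R] M →ₗ[R] R} (hω : ω.IsAlt)
    (u x y : M) : ω (transvection (ω u) u x) (transvection (ω u) u y) = ω x y := by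
  simp only [transvection.apply, map_add, map_smul, LinearMap.add_apply, LinearMap.smul_apply,
    smul_eq_mul, hω.self_eq_zero, ← hω.neg x u]
  ring

namespace IsQuadraticRefinement

variable {V : Type*} [AddCommGroup V] [Module (ZMod 2) V]
  {ω : V →ₗ[ZMod 2] V →ₗ[ZMod 2] ZMod 2} {q q' : V → ZMod 2}

lemma apply_zero (hq : IsQuadraticRefinement ω q) : q 0 = 0 := by
  simpa using hq 0 0

lemma isAlt (hq : IsQuadraticRefinement ω q) : ω.IsAlt := by
  intro v
  have h := hq v v
  rw [ZModModule.add_self, hq.apply_zero, ZModModule.add_self, zero_add] at h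
  exact h.symm

lemma omega_comm (hq : IsQuadraticRefinement ω q) (v w : V) : ω v w = ω w v := by
  rw [← hq.isAlt.neg, ZMod.neg_eq_self_mod_two]

lemma apply_smul (hq : IsQuadraticRefinement ω q) (x : ZMod 2) (v : V) : q (x • v) = x * q v := by
  obtain rfl | rfl : x = 0 ∨ x = 1 := by decide +revert
  · simp [hq.apply_zero]
  · simp

lemma apply_sum_of_orthogonal (hq : IsQuadraticRefinement ω q) {ι : Type*} (s : Finset ι)
    (w : ι → V) (h : ∀ i ∈ s, ∀ j ∈ s, i ≠ j → ω (w i) (w j) = 0) :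
    q (∑ i ∈ s, w i) = ∑ i ∈ s, q (w i) := by
  induction s using Finset.cons_induction with
  | empty => simpa using hq.apply_zero
  | cons a s ha ih =>
    have hortho : ω (w a) (∑ i ∈ s, w i) = 0 := by
      rw [map_sum]
      exact sum_eq_zero fun j hj ↦ h a (mem_cons_self a s) j (mem_cons_of_mem hj)
        (fun e ↦ ha (e ▸ hj))
    rw [sum_cons, sum_cons, hq, hortho, add_zero,
      ih fun i hi j hj ↦ h i (mem_cons_of_mem hi) j (mem_cons_of_mem hj)]

lemma comp_symm (hq : IsQuadraticRefinement ω q) {γ : V ≃ₗ[ZMod 2] V}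
    (hγ : ∀ v w, ω (γ v) (γ w) = ω v w) : IsQuadraticRefinement ω (fun v ↦ q (γ.symm v)) := by
  intro v w
  simp only [map_add, hq _ _, LinearEquiv.apply_symm_apply_symm_of_preserves hγ]

lemma add_linearMap (hq : IsQuadraticRefinement ω q) (f : V →ₗ[ZMod 2] ZMod 2) :
    IsQuadraticRefinement ω (fun v ↦ q v + f v) := by
  intro v w
  simp only [hq v w, map_add]
  ring

lemma exists_linearMap_eq_add (hq : IsQuadraticRefinement ω q)
    (hq' : IsQuadraticRefinement ω q') : ∃ f : V →ₗ[ZMod 2] ZMod 2, ∀ v, q' v = q v + f v := by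
  let f : V →+ ZMod 2 := AddMonoidHom.mk' (fun v ↦ q' v - q v) fun v w ↦ by
    simp only [hq v w, hq' v w]
    ring
  exact ⟨f.toZModLinearMap 2, fun v ↦ by simp [f]⟩

lemma apply_transvection (hq : IsQuadraticRefinement ω q) {u : V} (hu : q u = 0) (x : V) :
    q (LinearMap.transvection (ω u) u x) = q x + ω u x := by
  rw [LinearMap.transvection.apply, hq, hq.apply_smul, hu, map_smul, smul_eq_mul,
    hq.omega_comm x u, mul_zero, add_zero, ← sq, ZMod.pow_card]

end IsQuadraticRefinement

namespace IsSymplecticBasis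

variable {V : Type*} [AddCommGroup V] [Module (ZMod 2) V] {g : ℕ}
  {ω : V →ₗ[ZMod 2] V →ₗ[ZMod 2] ZMod 2} {b : Module.Basis (Fin g ⊕ Fin g) (ZMod 2) V}
  {q q' : V → ZMod 2}

lemma exists_omega_eq (hb : IsSymplecticBasis ω b) (hω : ∀ v w, ω v w = ω w v)
    (f : V →ₗ[ZMod 2] ZMod 2) : ∃ u, ∀ v, ω u v = f v := by
  refine ⟨∑ i, (f (b (inr i)) • b (inl i) + f (b (inl i)) • b (inr i)), fun v ↦ ?_⟩
  suffices h : ω (∑ i, (f (b (inr i)) • b (inl i) + f (b (inl i)) • b (inr i))) = f from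
    LinearMap.congr_fun h v
  refine b.ext fun j ↦ ?_
  rcases j with k | k <;>
    simp [LinearMap.sum_apply, hb.1, hb.2.1, hb.2.2, hω (b (inr _)) (b (inl k))]

lemma apply_sum (hb : IsSymplecticBasis ω b) (hq : IsQuadraticRefinement ω q)
    (x y : Fin g → ZMod 2) :
    q (∑ i, (x i • b (inl i) + y i • b (inr i))) =
      ∑ i, (x i * q (b (inl i)) + y i * q (b (inr i)) + x i * y i) := by
  rw [hq.apply_sum_of_orthogonal]
  · refine sum_congr rfl fun i _ ↦ ?_
    simp [hq _ _, hq.apply_smul, hb.1, mul_comm]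
  · intro i _ j _ hij
    simp [hb.1, hb.2.1, hb.2.2, hq.omega_comm (b (inr i)) (b (inl j)), hij, Ne.symm hij]

lemma sum_sign_eq [Fintype V] (hb : IsSymplecticBasis ω b) (hq : IsQuadraticRefinement ω q) :
    ∑ v, zmodTwoSign (q v) = 2 ^ g * zmodTwoSign (arfInvariant b q) := by
  let e : (Fin g → ZMod 2 × ZMod 2) ≃ V :=
    (Equiv.arrowProdEquivProdArrow _ _ _).trans
      ((Equiv.sumArrowEquivProdArrow _ _ _).symm.trans b.equivFun.symm.toEquiv)
  have he : ∀ z, e z = ∑ i, ((z i).1 • b (inl i) + (z i).2 • b (inr i)) := fun z ↦ by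
    simp [e, Module.Basis.equivFun_symm_apply, Fintype.sum_sum_type, sum_add_distrib]
  calc ∑ v, zmodTwoSign (q v)
      = ∑ z : Fin g → ZMod 2 × ZMod 2, ∏ i, zmodTwoSign
          ((z i).1 * q (b (inl i)) + (z i).2 * q (b (inr i)) + (z i).1 * (z i).2) := by
        rw [← e.sum_comp]
        simp only [he, hb.apply_sum hq, zmodTwoSign_sum]
    _ = ∏ i, ∑ z : ZMod 2 × ZMod 2,
          zmodTwoSign (z.1 * q (b (inl i)) + z.2 * q (b (inr i)) + z.1 * z.2) := by
        rw [Fintype.prod_sum]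
    _ = 2 ^ g * zmodTwoSign (arfInvariant b q) := by
        simp [sum_zmodTwoSign_plane, prod_mul_distrib, arfInvariant, zmodTwoSign_sum]

lemma arfInvariant_eq_of_sum_sign_eq [Fintype V] (hb : IsSymplecticBasis ω b)
    (hq : IsQuadraticRefinement ω q) (hq' : IsQuadraticRefinement ω q') (a : ZMod 2)
    (h : ∑ v, zmodTwoSign (q' v) = zmodTwoSign a * ∑ v, zmodTwoSign (q v)) :
    arfInvariant b q' = a + arfInvariant b q := by
  rw [hb.sum_sign_eq hq', hb.sum_sign_eq hq, mul_left_comm, ← zmodTwoSign_add] at h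
  exact zmodTwoSign_injective (mul_left_cancel₀ (by positivity) h)

lemma arfInvariant_comp_symm (hb : IsSymplecticBasis ω b) (hq : IsQuadraticRefinement ω q)
    {γ : V ≃ₗ[ZMod 2] V} (hγ : ∀ v w, ω (γ v) (γ w) = ω v w) :
    arfInvariant b (fun v ↦ q (γ.symm v)) = arfInvariant b q := by
  have := Module.fintypeOfFintype b
  refine (hb.arfInvariant_eq_of_sum_sign_eq hq (hq.comp_symm hγ) 0 ?_).trans (zero_add _)
  rw [zmodTwoSign_zero, one_mul]
  exact γ.symm.toEquiv.sum_comp fun v ↦ zmodTwoSign (q v)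

lemma arfInvariant_add_omega (hb : IsSymplecticBasis ω b) (hq : IsQuadraticRefinement ω q)
    (u : V) : arfInvariant b (fun v ↦ q v + ω u v) = q u + arfInvariant b q := by
  have := Module.fintypeOfFintype b
  refine hb.arfInvariant_eq_of_sum_sign_eq hq (hq.add_linearMap (ω u)) (q u) ?_
  have hshift : ∀ v, q v + ω u v = q u + q (v + u) := fun v ↦ by
    rw [hq, hq.omega_comm v u]
    linear_combination -ZModModule.add_self (q u)
  simp only [hshift, zmodTwoSign_add, ← mul_sum]
  congr 1
  exact Fintype.sum_equiv (Equiv.addRight u) _ _ fun _ ↦ rfl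

end IsSymplecticBasis

/-- The orbits of the symplectic group on quadratic forms, acting by
`(γ · q)(v) = q (γ⁻¹ v)`, are exactly the level sets of the Arf invariant:
the action preserves being a quadratic form and its Arf invariant, and it is
transitive on each of the two level sets. -/
theorem symplectic_group_orbits_are_arf_level_sets {V : Type*} [AddCommGroup V]
    [Module (ZMod 2) V] {g : ℕ}
    (ω : V →ₗ[ZMod 2] V →ₗ[ZMod 2] ZMod 2)
    (b : Module.Basis (Fin g ⊕ Fin g) (ZMod 2) V)
    (hb : IsSymplecticBasis ω b) :
    -- the action preserves quadratic refinements and the Arf invariant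
    (∀ (γ : V ≃ₗ[ZMod 2] V), (∀ v w, ω (γ v) (γ w) = ω v w) →
      ∀ q : V → ZMod 2, IsQuadraticRefinement ω q →
        IsQuadraticRefinement ω (fun v => q (γ.symm v)) ∧
        arfInvariant b (fun v => q (γ.symm v)) = arfInvariant b q) ∧
    -- transitivity on each level set of the Arf invariant
    (∀ q q' : V → ZMod 2, IsQuadraticRefinement ω q → IsQuadraticRefinement ω q' →
      arfInvariant b q = arfInvariant b q' →
      ∃ γ : V ≃ₗ[ZMod 2] V, (∀ v w, ω (γ v) (γ w) = ω v w) ∧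
        ∀ v, q' v = q (γ.symm v)) := by
  refine ⟨fun γ hγ q hq ↦ ⟨hq.comp_symm hγ, hb.arfInvariant_comp_symm hq hγ⟩, ?_⟩
  intro q q' hq hq' harf
  obtain ⟨f, hf⟩ := hq.exists_linearMap_eq_add hq'
  obtain ⟨u, hu⟩ := hb.exists_omega_eq hq.omega_comm f
  have hq'_eq : q' = fun v ↦ q v + ω u v := funext fun v ↦ by rw [hf, hu]
  have hqu : q u = 0 := by
    have := hb.arfInvariant_add_omega hq u
    rwa [← hq'_eq, ← harf, right_eq_add] at this
  let τ := LinearEquiv.transvection (f := ω u) (v := u) (hq.isAlt u)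
  refine ⟨τ.symm, LinearEquiv.apply_symm_apply_symm_of_preserves
    (hq.isAlt.apply_transvection u), fun v ↦ ?_⟩
  rw [LinearEquiv.symm_symm, LinearEquiv.transvection.coe_apply, hq.apply_transvection hqu,
    hq'_eq]
end

section
/- For g = 3: given an Aronhold system q₁,…,q₇ of odd quadratic forms, the 35 forms q_{ijk} := q_i + q_j + q_k for distinct i, j, k, together with q_S := q₁ + ⋯ + q₇, are precisely the 36 even quadratic forms, and the q_{ijk} are pairwise distinct and distinct from q_S. -/
/-- An Aronhold system for `g = 3`: seven pairwise distinct odd quadratic forms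
refining `ω`, every three of which are azygetic (i.e. the pointwise sum of any
three of them is an even quadratic form). -/
noncomputable def IsAronholdSystem {V : Type*} [AddCommGroup V] [Module (ZMod 2) V]
    (ω : V →ₗ[ZMod 2] V →ₗ[ZMod 2] ZMod 2)
    (b : Module.Basis (Fin 3 ⊕ Fin 3) (ZMod 2) V)
    (q : Fin 7 → V → ZMod 2) : Prop :=
  Function.Injective q ∧
  (∀ k, IsQuadraticRefinement ω (q k) ∧ arfInvariant b (q k) = 1) ∧
  (∀ i j k : Fin 7, i ≠ j → i ≠ k → j ≠ k →
    arfInvariant b (fun v => q i v + q j v + q k v) = 0)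

/-!
Put `ℓₛ = qₛ + q₀`. Each `ℓₛ` is additive, hence a linear functional, and the Arf invariant
is a quadratic form on functions `V → 𝔽₂` whose polar form pairs `ℓₛ` and `ℓₜ` (for distinct
nonzero `s, t`) to `1`, because `q₀, qₛ, qₜ` are azygetic. A Gram matrix `J - I` of even size is
invertible in characteristic `2`, so `ℓ₁, …, ℓ₆` form a basis of `V*`. Hence every refinement is
`q_A = ∑_{s ∈ A} qₛ` for a unique `A ⊆ {0, …, 6}` of odd size, and `Arf(q_A) = 1 + (|A| choose 2)`,
which vanishes exactly when `|A| = 3` or `|A| = 7`.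
-/

open Finset

theorem Finset.sum_triple {ι M : Type*} [DecidableEq ι] [AddCommMonoid M] {i j k : ι}
    (hij : i ≠ j) (hik : i ≠ k) (hjk : j ≠ k) (f : ι → M) :
    ∑ s ∈ {i, j, k}, f s = f i + f j + f k := by
  rw [sum_insert (by simp [hij, hik]), sum_pair hjk, add_assoc]

theorem Finset.eq_of_erase_eq_of_odd_card {α : Type*} [DecidableEq α] {A C : Finset α} {a : α}
    (h : A.erase a = C.erase a) (hA : Odd #A) (hC : Odd #C) : A = C := by
  have hcard := congrArg card h
  rw [Nat.odd_iff] at hA hC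
  by_cases ha : a ∈ A <;> by_cases hc : a ∈ C
  · rw [← insert_erase ha, h, insert_erase hc]
  · rw [card_erase_of_mem ha, erase_eq_of_notMem hc] at hcard
    have := card_pos.mpr ⟨a, ha⟩
    omega
  · rw [card_erase_of_mem hc, erase_eq_of_notMem ha] at hcard
    have := card_pos.mpr ⟨a, hc⟩
    omega
  · rwa [erase_eq_of_notMem ha, erase_eq_of_notMem hc] at h

namespace ZModModule

variable {ι M : Type*} [AddCommGroup M] [Module (ZMod 2) M]

theorem nsmul_eq_self_of_odd {n : ℕ} (hn : Odd n) (x : M) : n • x = x := by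
  rw [← Nat.cast_smul_eq_nsmul (ZMod 2), ZMod.natCast_eq_one_iff_odd.mpr hn, one_smul]

theorem sum_eq_add_sum_erase_add_of_odd [DecidableEq ι] {A : Finset ι} (hA : Odd #A)
    (f : ι → M) (a : ι) : ∑ s ∈ A, f s = f a + ∑ s ∈ A.erase a, (f s + f a) := by
  rw [sum_erase (f := fun s => f s + f a) A (add_self (f a)), sum_add_distrib, sum_const,
    nsmul_eq_self_of_odd hA, add_left_comm, add_self, add_zero]

theorem exists_subset_sum_eq_of_mem_span {v : ι → M} {I : Finset ι} {x : M}
    (hx : x ∈ Submodule.span (ZMod 2) (v '' I)) : ∃ T ⊆ I, ∑ i ∈ T, v i = x := by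
  classical
  obtain ⟨c, rfl⟩ := (Submodule.mem_span_image_finset_iff_exists_fun' (ZMod 2)).mp hx
  refine ⟨I.filter (c · = 1), filter_subset _ _, ?_⟩
  rw [sum_filter]
  refine sum_congr rfl fun i _ => ?_
  rcases (by decide : ∀ z : ZMod 2, z = 0 ∨ z = 1) (c i) with h | h <;> simp [h]

end ZModModule

theorem LinearIndepOn.eq_of_sum_eq {ι R M : Type*} [Ring R] [Nontrivial R] [AddCommGroup M]
    [Module R M] {v : ι → M} {I T T' : Finset ι} (hv : LinearIndepOn R v I) (hT : T ⊆ I)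
    (hT' : T' ⊆ I) (h : ∑ i ∈ T, v i = ∑ i ∈ T', v i) : T = T' := by
  classical
  have hcoeff := linearIndepOn_finset_iff.mp hv
    (fun i => (if i ∈ T then 1 else 0) - (if i ∈ T' then 1 else 0)) (by
      simp only [sub_smul, ite_smul, one_smul, zero_smul, sum_sub_distrib, sum_ite_mem,
        inter_eq_right.mpr hT, inter_eq_right.mpr hT', h, sub_self])
  ext i
  by_cases hi : i ∈ I
  · have := hcoeff i hi
    split_ifs at this <;> simp_all
  · exact iff_of_false (fun h => hi (hT h)) (fun h => hi (hT' h))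

theorem linearIndepOn_of_pairing_eq_one {K M ι : Type*} [CommRing K] [CharP K 2]
    [AddCommGroup M] [Module K M] (β : M →ₗ[K] M →ₗ[K] K) (v : ι → M) (I : Finset ι)
    (hI : Even #I) (hdiag : ∀ s ∈ I, β (v s) (v s) = 0)
    (hoff : ∀ s ∈ I, ∀ t ∈ I, s ≠ t → β (v s) (v t) = 1) :
    LinearIndepOn K v I := by
  classical
  rw [linearIndepOn_finset_iff]
  intro c hc
  have hconst : ∀ k ∈ I, c k = ∑ i ∈ I, c i := by
    intro k hk
    have h := congrArg (β.flip (v k)) hc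
    simp only [map_sum, map_smul, LinearMap.flip_apply, smul_eq_mul, map_zero] at h
    rw [← add_sum_erase I _ hk, hdiag k hk, sum_congr rfl fun i hi =>
      by rw [hoff i (mem_of_mem_erase hi) k hk (ne_of_mem_erase hi)]] at h
    simp only [mul_one, mul_zero, zero_add] at h
    rw [← add_sum_erase I _ hk, h, add_zero]
  have hzero : ∑ i ∈ I, c i = 0 := by
    rw [sum_congr rfl hconst, sum_const, nsmul_eq_mul,
      (CharP.cast_eq_zero_iff K 2 _).mpr (even_iff_two_dvd.mp hI), zero_mul]
  exact fun k hk => (hconst k hk).trans hzero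

namespace QuadraticMap

variable {R M : Type*} [CommRing R] [AddCommGroup M] [Module R M]

theorem polar_eq_map_add_add (Q : QuadraticMap R M R) (x a b : M) :
    polar Q a b = Q (x + a + b) - Q (x + a) - Q (x + b) + Q x := by
  have h := polar_add_left Q x a b
  simp only [polar] at h ⊢
  linear_combination -h

theorem map_add_sum_of_polar_eq_one {ι : Type*} (Q : QuadraticMap R M R) (x : M) (r : ι → M)
    (T : Finset ι) (hr : ∀ t ∈ T, Q (x + r t) = Q x)
    (hpolar : ∀ s ∈ T, ∀ t ∈ T, s ≠ t → polar Q (r s) (r t) = 1) :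
    Q (x + ∑ t ∈ T, r t) = Q x + ((#T).choose 2 : R) := by
  classical
  induction T using Finset.induction_on with
  | empty => simp
  | insert a T ha ih =>
    have hsum : polar Q (∑ t ∈ T, r t) (r a) = #T := by
      rw [← polarBilin_apply_apply, map_sum, LinearMap.sum_apply]
      simp only [polarBilin_apply_apply]
      rw [sum_congr rfl fun t ht => hpolar t (mem_insert_of_mem ht) a
        (mem_insert_self a T) (ne_of_mem_of_not_mem ht ha)]
      simp
    have hxa : Q (r a) + polar Q x (r a) = 0 := by
      have := QuadraticMap.map_add (⇑Q) x (r a)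
      rw [hr a (mem_insert_self a T)] at this
      linear_combination -this
    rw [sum_insert ha, add_left_comm, add_comm, QuadraticMap.map_add (⇑Q), polar_add_left, hsum,
      ih (fun t ht => hr t (mem_insert_of_mem ht))
        (fun s hs t ht => hpolar s (mem_insert_of_mem hs) t (mem_insert_of_mem ht)),
      card_insert_of_notMem ha, Nat.choose_succ_succ', Nat.choose_one_right]
    push_cast
    linear_combination hxa

end QuadraticMap

noncomputable def arfForm {V : Type*} [AddCommGroup V] [Module (ZMod 2) V] {g : ℕ}
    (b : Module.Basis (Fin g ⊕ Fin g) (ZMod 2) V) : QuadraticForm (ZMod 2) (V → ZMod 2) :=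
  ∑ i, QuadraticMap.linMulLin (LinearMap.proj (b (Sum.inl i))) (LinearMap.proj (b (Sum.inr i)))

theorem arfForm_apply {V : Type*} [AddCommGroup V] [Module (ZMod 2) V] {g : ℕ}
    (b : Module.Basis (Fin g ⊕ Fin g) (ZMod 2) V) (r : V → ZMod 2) :
    arfForm b r = arfInvariant b r := by
  simp [arfForm, arfInvariant, QuadraticMap.linMulLin_apply]

namespace IsQuadraticRefinement

variable {V : Type*} [AddCommGroup V] [Module (ZMod 2) V]
  {ω : V →ₗ[ZMod 2] V →ₗ[ZMod 2] ZMod 2}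

theorem exists_dual_eq_add {q q' : V → ZMod 2} (hq : IsQuadraticRefinement ω q)
    (hq' : IsQuadraticRefinement ω q') : ∃ φ : Module.Dual (ZMod 2) V, ⇑φ = q + q' := by
  refine ⟨(AddMonoidHom.mk' (q + q') fun v w => ?_).toZModLinearMap 2, rfl⟩
  simp only [Pi.add_apply, hq v w, hq' v w]
  rw [add_add_add_comm, add_add_add_comm (q v), ZModModule.add_self, add_zero]

theorem sum_of_odd_card {ι : Type*} {q : ι → V → ZMod 2} {A : Finset ι}
    (hq : ∀ s ∈ A, IsQuadraticRefinement ω (q s)) (hA : Odd #A) :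
    IsQuadraticRefinement ω (∑ s ∈ A, q s) := by
  intro v w
  simp only [Finset.sum_apply]
  rw [sum_congr rfl fun s hs => hq s hs v w, sum_add_distrib, sum_add_distrib, sum_const,
    ZModModule.nsmul_eq_self_of_odd hA]

end IsQuadraticRefinement

namespace IsAronholdSystem

variable {V : Type*} [AddCommGroup V] [Module (ZMod 2) V]
  {ω : V →ₗ[ZMod 2] V →ₗ[ZMod 2] ZMod 2} {b : Module.Basis (Fin 3 ⊕ Fin 3) (ZMod 2) V}
  {q : Fin 7 → V → ZMod 2}

theorem isQuadraticRefinement (hq : IsAronholdSystem ω b q) (s : Fin 7) :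
    IsQuadraticRefinement ω (q s) :=
  (hq.2.1 s).1

theorem arfInvariant_eq_one (hq : IsAronholdSystem ω b q) (s : Fin 7) :
    arfInvariant b (q s) = 1 :=
  (hq.2.1 s).2

theorem arfForm_add_diff (hq : IsAronholdSystem ω b q) (s : Fin 7) :
    arfForm b (q 0 + (q s + q 0)) = arfForm b (q 0) := by
  rw [add_left_comm, ZModModule.add_self, add_zero, arfForm_apply, arfForm_apply,
    hq.arfInvariant_eq_one, hq.arfInvariant_eq_one]

theorem polar_diff_diff (hq : IsAronholdSystem ω b q) {s t : Fin 7} (hs : s ≠ 0) (ht : t ≠ 0)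
    (hst : s ≠ t) : QuadraticMap.polar (arfForm b) (q s + q 0) (q t + q 0) = 1 := by
  have hazygetic : arfForm b (q 0 + (q s + q 0) + (q t + q 0)) = 0 := by
    rw [add_left_comm (q 0), ZModModule.add_self, add_zero, arfForm_apply,
      show q s + (q t + q 0) = q 0 + q s + q t by abel]
    exact hq.2.2 0 s t hs.symm ht.symm hst
  rw [QuadraticMap.polar_eq_map_add_add _ (q 0), hazygetic, hq.arfForm_add_diff,
    hq.arfForm_add_diff, arfForm_apply, hq.arfInvariant_eq_one]
  decide

theorem arfInvariant_add_sum_diff (hq : IsAronholdSystem ω b q) {T : Finset (Fin 7)}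
    (hT : 0 ∉ T) :
    arfInvariant b (q 0 + ∑ t ∈ T, (q t + q 0)) = 1 + ((#T).choose 2 : ZMod 2) := by
  rw [← arfForm_apply, QuadraticMap.map_add_sum_of_polar_eq_one _ _ _ _
    (fun t _ => hq.arfForm_add_diff t)
    (fun s hs t ht hst => hq.polar_diff_diff (ne_of_mem_of_not_mem hs hT)
      (ne_of_mem_of_not_mem ht hT) hst), arfForm_apply, hq.arfInvariant_eq_one]

theorem arfInvariant_sum_of_odd (hq : IsAronholdSystem ω b q) {A : Finset (Fin 7)}
    (hA : Odd #A) : arfInvariant b (∑ s ∈ A, q s) = 1 + ((#A).choose 2 : ZMod 2) := by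
  rw [ZModModule.sum_eq_add_sum_erase_add_of_odd hA q 0,
    hq.arfInvariant_add_sum_diff (notMem_erase 0 A)]
  by_cases h0 : 0 ∈ A
  · rw [← card_erase_add_one h0, Nat.odd_add_one, Nat.not_odd_iff_even] at hA
    rw [← card_erase_add_one h0, Nat.choose_succ_succ', Nat.choose_one_right, Nat.cast_add,
      ZMod.natCast_eq_zero_iff_even.mpr hA, zero_add]
  · rw [erase_eq_of_notMem h0]

theorem linearIndepOn_diff (hq : IsAronholdSystem ω b q) :
    LinearIndepOn (ZMod 2) (fun s => q s + q 0) (univ.erase 0 : Finset (Fin 7)) :=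
  linearIndepOn_of_pairing_eq_one (QuadraticMap.polarBilin (arfForm b)) _ _ (by decide)
    (fun s _ => by
      rw [QuadraticMap.polarBilin_apply_apply, QuadraticMap.polar_self, two_nsmul,
        ZModModule.add_self])
    (fun s hs t ht hst => hq.polar_diff_diff (ne_of_mem_erase hs) (ne_of_mem_erase ht) hst)

theorem exists_subset_sum_diff_eq (hq : IsAronholdSystem ω b q) (φ : Module.Dual (ZMod 2) V) :
    ∃ T ⊆ univ.erase 0, ∑ t ∈ T, (q t + q 0) = ⇑φ := by
  choose ℓ hℓ using fun s => (hq.isQuadraticRefinement s).exists_dual_eq_add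
    (hq.isQuadraticRefinement 0)
  have hli : LinearIndepOn (ZMod 2) ℓ (univ.erase 0 : Finset (Fin 7)) :=
    LinearIndepOn.of_comp (LinearMap.ltoFun (ZMod 2) V (ZMod 2) (ZMod 2))
      (by simpa [Function.comp_def, hℓ] using hq.linearIndepOn_diff)
  have : Module.Finite (ZMod 2) V := .of_basis b
  have hspan : Submodule.span (ZMod 2) (ℓ '' (univ.erase 0 : Finset (Fin 7))) = ⊤ := by
    rw [Set.image_eq_range]
    exact LinearIndependent.span_eq_top_of_card_eq_finrank' hli
      (by simp [Module.finrank_eq_card_basis b])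
  obtain ⟨T, hT, hTφ⟩ := ZModModule.exists_subset_sum_eq_of_mem_span (hspan ▸ Submodule.mem_top :
    φ ∈ Submodule.span (ZMod 2) (ℓ '' (univ.erase 0 : Finset (Fin 7))))
  refine ⟨T, hT, ?_⟩
  simp only [← hℓ, ← hTφ]
  exact (map_sum (LinearMap.ltoFun (ZMod 2) V (ZMod 2) (ZMod 2)) ℓ T).symm

theorem exists_odd_sum_eq (hq : IsAronholdSystem ω b q) {f : V → ZMod 2}
    (hf : IsQuadraticRefinement ω f) : ∃ A : Finset (Fin 7), Odd #A ∧ f = ∑ s ∈ A, q s := by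
  obtain ⟨φ, hφ⟩ := hf.exists_dual_eq_add (hq.isQuadraticRefinement 0)
  obtain ⟨T, hT, hTφ⟩ := hq.exists_subset_sum_diff_eq φ
  have h0T : 0 ∉ T := fun h => by simpa using hT h
  obtain ⟨A, hAT, hA⟩ : ∃ A : Finset (Fin 7), A.erase 0 = T ∧ Odd #A := by
    by_cases hT : Odd #T
    · exact ⟨T, erase_eq_of_notMem h0T, hT⟩
    · exact ⟨insert 0 T, erase_insert h0T, by rwa [card_insert_of_notMem h0T, Nat.odd_add_one]⟩
  refine ⟨A, hA, ?_⟩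
  rw [ZModModule.sum_eq_add_sum_erase_add_of_odd hA q 0, hAT, hTφ, hφ, add_left_comm,
    ZModModule.add_self, add_zero]

theorem eq_of_sum_eq (hq : IsAronholdSystem ω b q) {A C : Finset (Fin 7)} (hA : Odd #A)
    (hC : Odd #C) (h : ∑ s ∈ A, q s = ∑ s ∈ C, q s) : A = C := by
  rw [ZModModule.sum_eq_add_sum_erase_add_of_odd hA q 0,
    ZModModule.sum_eq_add_sum_erase_add_of_odd hC q 0] at h
  exact eq_of_erase_eq_of_odd_card (hq.linearIndepOn_diff.eq_of_sum_eq
    (erase_subset_erase 0 (subset_univ A)) (erase_subset_erase 0 (subset_univ C))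
    (add_left_cancel h)) hA hC

theorem isQuadraticRefinement_and_arfInvariant_eq_zero_iff (hq : IsAronholdSystem ω b q)
    {f : V → ZMod 2} : IsQuadraticRefinement ω f ∧ arfInvariant b f = 0 ↔
      ∃ A : Finset (Fin 7), (#A = 3 ∨ #A = 7) ∧ f = ∑ s ∈ A, q s := by
  constructor
  · rintro ⟨hf, hf0⟩
    obtain ⟨A, hA, rfl⟩ := hq.exists_odd_sum_eq hf
    rw [hq.arfInvariant_sum_of_odd hA] at hf0
    refine ⟨A, ?_, rfl⟩
    have := card_le_univ A
    rw [Fintype.card_fin] at this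
    interval_cases h : #A <;> simp_all <;> contradiction
  · rintro ⟨A, hA, rfl⟩
    have hodd : Odd #A := by rcases hA with h | h <;> rw [h] <;> decide
    refine ⟨IsQuadraticRefinement.sum_of_odd_card (fun s _ => hq.isQuadraticRefinement s) hodd,
      ?_⟩
    rw [hq.arfInvariant_sum_of_odd hodd]
    rcases hA with h | h <;> rw [h] <;> decide

end IsAronholdSystem

theorem aronhold_even_forms_general {V : Type*} [AddCommGroup V] [Module (ZMod 2) V]
    (ω : V →ₗ[ZMod 2] V →ₗ[ZMod 2] ZMod 2)
    (b : Module.Basis (Fin 3 ⊕ Fin 3) (ZMod 2) V)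
    (q : Fin 7 → V → ZMod 2)
    (hq : IsAronholdSystem ω b q) :
    -- the even quadratic forms are exactly `q_S` and the `q_{ijk}`
    ({f : V → ZMod 2 | IsQuadraticRefinement ω f ∧ arfInvariant b f = 0} =
      {fun v => ∑ k : Fin 7, q k v} ∪
      {f | ∃ i j k : Fin 7, i ≠ j ∧ i ≠ k ∧ j ≠ k ∧
        f = fun v => q i v + q j v + q k v}) ∧
    -- the `q_{ijk}` are pairwise distinct for distinct triples of indices
    (∀ i j k l m n : Fin 7, i ≠ j → i ≠ k → j ≠ k → l ≠ m → l ≠ n → m ≠ n →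
      ({i, j, k} : Finset (Fin 7)) ≠ {l, m, n} →
      (fun v => q i v + q j v + q k v) ≠ (fun v => q l v + q m v + q n v)) ∧
    -- and distinct from `q_S`
    (∀ i j k : Fin 7, i ≠ j → i ≠ k → j ≠ k →
      (fun v => q i v + q j v + q k v) ≠ (fun v => ∑ t : Fin 7, q t v)) := by
  have triple_eq : ∀ {i j k : Fin 7}, i ≠ j → i ≠ k → j ≠ k →
      (fun v => q i v + q j v + q k v) = ∑ s ∈ {i, j, k}, q s :=
    fun hij hik hjk => (sum_triple hij hik hjk q).symm
  have odd_triple : ∀ {i j k : Fin 7}, i ≠ j → i ≠ k → j ≠ k → Odd #{i, j, k} :=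
    fun hij hik hjk => by rw [card_triple_eq_three_iff.mpr ⟨hij, hik, hjk⟩]; decide
  have sum_univ_eq : (fun v => ∑ k : Fin 7, q k v) = ∑ s, q s := by
    ext v
    simp only [Finset.sum_apply]
  refine ⟨?_, ?_, ?_⟩
  · ext f
    simp only [Set.mem_ofPred_eq, Set.mem_union, Set.mem_singleton_iff,
      hq.isQuadraticRefinement_and_arfInvariant_eq_zero_iff]
    constructor
    · rintro ⟨A, hA | hA, rfl⟩
      · obtain ⟨i, j, k, hij, hik, hjk, rfl⟩ := card_eq_three.mp hA
        exact Or.inr ⟨i, j, k, hij, hik, hjk, (triple_eq hij hik hjk).symm⟩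
      · exact Or.inl (by rw [eq_univ_of_card A hA, sum_univ_eq])
    · rintro (rfl | ⟨i, j, k, hij, hik, hjk, rfl⟩)
      · exact ⟨univ, Or.inr rfl, sum_univ_eq⟩
      · exact ⟨{i, j, k}, Or.inl (card_triple_eq_three_iff.mpr ⟨hij, hik, hjk⟩),
          triple_eq hij hik hjk⟩
  · intro i j k l m n hij hik hjk hlm hln hmn hne h
    rw [triple_eq hij hik hjk, triple_eq hlm hln hmn] at h
    exact hne (hq.eq_of_sum_eq (odd_triple hij hik hjk) (odd_triple hlm hln hmn) h)
  · intro i j k hij hik hjk h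
    rw [triple_eq hij hik hjk, sum_univ_eq] at h
    have := congrArg card (hq.eq_of_sum_eq (odd_triple hij hik hjk) (by decide) h)
    rw [card_triple_eq_three_iff.mpr ⟨hij, hik, hjk⟩, card_univ, Fintype.card_fin] at this
    omega

/-- Given an Aronhold system `q₁, …, q₇`, the 35 forms `q_{ijk} = q_i + q_j + q_k`
(for distinct `i, j, k`), together with `q_S = q₁ + ⋯ + q₇`, are precisely the 36
even quadratic forms; moreover the `q_{ijk}` are pairwise distinct (for distinct
index triples) and distinct from `q_S`. -/
theorem aronhold_even_forms {V : Type*} [AddCommGroup V] [Module (ZMod 2) V]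
    (ω : V →ₗ[ZMod 2] V →ₗ[ZMod 2] ZMod 2)
    (halt : ∀ v, ω v v = 0)
    (b : Module.Basis (Fin 3 ⊕ Fin 3) (ZMod 2) V)
    (hb : IsSymplecticBasis ω b)
    (q : Fin 7 → V → ZMod 2)
    (hq : IsAronholdSystem ω b q) :
    -- the even quadratic forms are exactly `q_S` and the `q_{ijk}`
    ({f : V → ZMod 2 | IsQuadraticRefinement ω f ∧ arfInvariant b f = 0} =
      {fun v => ∑ k : Fin 7, q k v} ∪
      {f | ∃ i j k : Fin 7, i ≠ j ∧ i ≠ k ∧ j ≠ k ∧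
        f = fun v => q i v + q j v + q k v}) ∧
    -- the `q_{ijk}` are pairwise distinct for distinct triples of indices
    (∀ i j k l m n : Fin 7, i ≠ j → i ≠ k → j ≠ k → l ≠ m → l ≠ n → m ≠ n →
      ({i, j, k} : Finset (Fin 7)) ≠ {l, m, n} →
      (fun v => q i v + q j v + q k v) ≠ (fun v => q l v + q m v + q n v)) ∧
    -- and distinct from `q_S`
    (∀ i j k : Fin 7, i ≠ j → i ≠ k → j ≠ k →
      (fun v => q i v + q j v + q k v) ≠ (fun v => ∑ t : Fin 7, q t v)) :=
  aronhold_even_forms_general ω b q hq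
end
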